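/- Fix an integer b ≥ 2 and a dimension d ≥ 1. There exists a constant C = C(b,d) > 0 such that for all j ∈ ℕ₋₁^d, m ∈ 𝔻_j, l ∈ 𝔹_j and α ∈ ℕ₀^d: |⟨h_{j,m,l}, wal_α⟩| ≤ C · b^{−|j|₊}; moreover, if ρ₁(α_i) ≠ j_i + 1 for some 1 ≤ i ≤ d, then ⟨h_{j,m,l}, wal_α⟩ = 0. -/

import Mathlib

open MeasureTheory Finset
open scoped BigOperators Classical

noncomputable section

namespace DigitalNets

/-- The `b`-adic digit vector `ν̄ = (ν₀,…,ν_{n−1})ᵀ ∈ 𝔽_b^n` of `ν ∈ ℕ`. -/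
def digitVec (b n : ℕ) (ν : ℕ) : Fin n → ZMod b :=
  fun k => ((ν / b ^ (k : ℕ)) % b : ℕ)

/-- The point of the digital net with index `ν`:
`x_{i,ν} = Σ_{k=1}^s x_{i,ν,k} b^{−k}` where `(x_{i,ν,1},…,x_{i,ν,s})ᵀ = C_i ν̄`. -/
def digitalPoint {b n s d : ℕ} (Cm : Fin d → Matrix (Fin s) (Fin n) (ZMod b)) (ν : ℕ) :
    Fin d → ℝ :=
  fun i => ∑ k : Fin s,
    (((Matrix.mulVec (Cm i) (digitVec b n ν)) k).val : ℝ) * ((b : ℝ) ^ ((k : ℕ) + 1))⁻¹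

/-- The digital net over `𝔽_b` generated by `C₁,…,C_d`, as the indexed family (multiset)
of its `b^n` points `x₀,…,x_{b^n−1}`. -/
def digitalNet {b n s d : ℕ} (Cm : Fin d → Matrix (Fin s) (Fin n) (ZMod b)) :
    Fin (b ^ n) → Fin d → ℝ :=
  fun ν => digitalPoint Cm (ν : ℕ)

/-- `C₁,…,C_d` generate an order `σ` digital `(v,n,d)`-net over `𝔽_b`:
for all `η₁,…,η_d ∈ ℕ₀` and all `1 ≤ λ_{i,1} < … < λ_{i,η_i} ≤ s` with
`Σᵢ (λ_{i,1}+…+λ_{i,min(η_i,σ)}) ≤ σn − v`, the rows `c_{i,λ_{i,k}}` are linearly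
independent over `𝔽_b`.  (Here `lam i k : Fin s` encodes the index `λ_{i,k+1} = lam i k + 1`.) -/
def IsOrderDigitalNet (b σ n d s v : ℕ) (Cm : Fin d → Matrix (Fin s) (Fin n) (ZMod b)) : Prop :=
  ∀ (η : Fin d → ℕ) (lam : (i : Fin d) → Fin (η i) → Fin s),
    (∀ i, StrictMono (lam i)) →
    (∑ i, ∑ k : Fin (η i), if (k : ℕ) < σ then (lam i k : ℕ) + 1 else 0) ≤ σ * n - v →
    LinearIndependent (ZMod b)
      (fun p : (i : Fin d) × Fin (η i) => fun jc : Fin n => Cm p.1 (lam p.1 p.2) jc)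

/-- The unit cube `[0,1)^d`. -/
def unitCube (d : ℕ) : Set (Fin d → ℝ) := Set.univ.pi fun _ => Set.Ico (0 : ℝ) 1

/-- The discrepancy function `D_P(x) = (1/N) Σ_{z∈P} χ_{[0,x)}(z) − x₁⋯x_d` of a
point multiset `P` given as an indexed family of `N` points. -/
def discrepancy (d N : ℕ) (P : Fin N → Fin d → ℝ) (x : Fin d → ℝ) : ℝ :=
  ((Finset.univ.filter fun ν : Fin N =>
      P ν ∈ Set.univ.pi fun i => Set.Ico (0 : ℝ) (x i)).card : ℝ) / (N : ℝ) - ∏ i, x i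

/-- One-dimensional `b`-adic Haar function `h_{j,m,l}` (level `j ∈ ℕ₋₁`, encoded as `j : ℤ`). -/
def haar1 (b : ℕ) (j : ℤ) (m l : ℕ) (x : ℝ) : ℂ :=
  if j = -1 then (if x ∈ Set.Ico (0 : ℝ) 1 then 1 else 0)
  else if x ∈ Set.Ico ((b : ℝ) ^ (-j) * (m : ℝ)) ((b : ℝ) ^ (-j) * ((m : ℝ) + 1)) then
    Complex.exp (2 * (Real.pi : ℂ) * Complex.I * (l : ℂ) *
      ((⌊(b : ℝ) ^ (j + 1) * x⌋ % (b : ℤ) : ℤ) : ℂ) / (b : ℂ))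
  else 0

/-- `d`-dimensional `b`-adic Haar function `h_{j,m,l}(x) = ∏ᵢ h_{jᵢ,mᵢ,lᵢ}(xᵢ)`. -/
def haar (b d : ℕ) (j : Fin d → ℤ) (m l : Fin d → ℕ) (x : Fin d → ℝ) : ℂ :=
  ∏ i, haar1 b (j i) (m i) (l i) (x i)

/-- Encoding of levels: `jr : Fin d → ℕ` encodes `j ∈ ℕ₋₁^d` via `j i = jr i − 1`. -/
def level {d : ℕ} (jr : Fin d → ℕ) : Fin d → ℤ := fun i => (jr i : ℤ) - 1

/-- `|j|₊ = Σᵢ max(jᵢ,0)` for the level encoded by `jr`. -/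
def levelSum {d : ℕ} (jr : Fin d → ℕ) : ℕ := ∑ i, (jr i - 1)

/-- `l ∈ 𝔹_j`: `l i = 1` if `j i = −1` (i.e. `jr i = 0`), and `1 ≤ l i ≤ b−1` otherwise. -/
def validL (b : ℕ) {d : ℕ} (jr : Fin d → ℕ) (l : Fin d → ℕ) : Prop :=
  ∀ i, if jr i = 0 then l i = 1 else 1 ≤ l i ∧ l i < b

/-- Inner product `⟨f,g⟩ = ∫_{[0,1)^d} f(x) conj(g(x)) dx`. -/
def innerCube (d : ℕ) (f g : (Fin d → ℝ) → ℂ) : ℂ :=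
  ∫ x in unitCube d, f x * (starRingEnd ℂ) (g x)

/-- One-dimensional `b`-adic interval `I_{j,m}` (level `j ∈ ℕ₋₁` encoded as `j : ℤ`). -/
def badicInterval1 (b : ℕ) (j : ℤ) (m : ℕ) : Set ℝ :=
  if j = -1 then Set.Ico 0 1
  else Set.Ico ((b : ℝ) ^ (-j) * (m : ℝ)) ((b : ℝ) ^ (-j) * ((m : ℝ) + 1))

/-- `d`-dimensional `b`-adic interval `I_{j,m} = I_{j₁,m₁}×…×I_{j_d,m_d}`. -/
def badicInterval (b : ℕ) {d : ℕ} (j : Fin d → ℤ) (m : Fin d → ℕ) : Set (Fin d → ℝ) :=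
  Set.univ.pi fun i => badicInterval1 b (j i) (m i)

/-- The `a`-th `b`-adic digit of `x ∈ [0,1)` (`a = 0` gives the first digit `x₁`),
for the expansion not ending in an infinite string of digits `b−1`. -/
def xdigit (b : ℕ) (a : ℕ) (x : ℝ) : ℤ := ⌊(b : ℝ) ^ (a + 1) * x⌋ % (b : ℤ)

/-- One-dimensional `b`-adic Walsh function `wal_α`. -/
def walsh1 (b : ℕ) (α : ℕ) (x : ℝ) : ℂ :=
  Complex.exp (2 * (Real.pi : ℂ) * Complex.I / (b : ℂ) *
    ∑ a ∈ Finset.range (α + 1), (((α / b ^ a) % b : ℕ) : ℂ) * ((xdigit b a x : ℤ) : ℂ))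

/-- `d`-dimensional Walsh function `wal_t(x) = ∏ᵢ wal_{tᵢ}(xᵢ)`. -/
def walsh (b d : ℕ) (t : Fin d → ℕ) (x : Fin d → ℝ) : ℂ := ∏ i, walsh1 b (t i) (x i)

/-- The vector `t̄ = (τ₀,…,τ_{s−1})ᵀ ∈ 𝔽_b^s` of the first `s` `b`-adic digits of `t`. -/
def dualDigitVec (b s : ℕ) (t : ℕ) : Fin s → ZMod b :=
  fun k => ((t / b ^ (k : ℕ)) % b : ℕ)

/-- The dual net: `t ∈ 𝒟(C₁,…,C_d)` iff `C₁ᵀt̄₁ + … + C_dᵀt̄_d = 0 ∈ 𝔽_b^n`. -/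
def InDual {b n s d : ℕ} (Cm : Fin d → Matrix (Fin s) (Fin n) (ZMod b)) (t : Fin d → ℕ) : Prop :=
  ∑ i, Matrix.mulVec (Matrix.transpose (Cm i)) (dualDigitVec b s (t i)) = 0

/-- The positions `0 < a₁ < … < a_ν` of the nonzero `b`-adic digits of `α`
(`a` is a position iff the digit of `b^{a−1}` in `α` is nonzero). -/
def digitPositions (b α : ℕ) : Finset ℕ :=
  (Finset.range (α + 1)).filter fun a => 1 ≤ a ∧ (α / b ^ (a - 1)) % b ≠ 0

/-- The weight `ρ_σ(α) = a_ν + a_{ν−1} + … + a_{max(ν−σ+1,1)}`: the sum of the `σ`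
largest positions of nonzero `b`-adic digits of `α`; `ρ_σ(0) = 0`. -/
def weight (b σ α : ℕ) : ℕ :=
  ∑ a ∈ digitPositions b α,
    if ((digitPositions b α).filter fun a' => a < a').card < σ then a else 0

/-- `ρ_σ(t) = ρ_σ(t₁) + … + ρ_σ(t_d)` for `t ∈ ℕ₀^d`. -/
def weightVec (b σ : ℕ) {d : ℕ} (t : Fin d → ℕ) : ℕ := ∑ i, weight b σ (t i)

/-- `t′`: the number `t` with its leading `b`-adic digit removed; `0′ = 0`. -/
def trunc (b t : ℕ) : ℕ := t % b ^ (weight b 1 t - 1)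

/-- Walsh coefficient `χ̂_{[0,x)}(η) = ∫₀^x conj(wal_η(y)) dy` of the indicator of `[0,x)`. -/
def walshCoeff (b : ℕ) (η : ℕ) (x : ℝ) : ℂ :=
  ∫ y in Set.Ico (0 : ℝ) x, (starRingEnd ℂ) (walsh1 b η y)

end DigitalNets

/-!
Haar and Walsh functions are products over the coordinates, so by Fubini the inner product is a
product of one-dimensional integrals `∫₀¹ h_{j,m,l} · conj wal_α`. Each is bounded by
`|I_{j,m}| = b^{-max(j,0)}`, because `|h_{j,m,l}| ≤ 1_{I_{j,m}}` and `|wal_α| = 1`.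
If `ρ₁(α) ≤ j`, then `wal_α` only sees the first `j` digits and is constant on `I_{j,m}`,
while `h_{j,m,l}` takes the values `e_b(l k)` on its `b` subintervals. If `ρ₁(α) > j + 1`, then
`h_{j,m,l}` is constant on the `b`-adic intervals of level `t = ρ₁(α) - 1`, while `conj wal_α` picks up the
factor `e_b(-β k)` on their subintervals, `β ≠ 0` being the leading digit of `α`. In both cases
the integral is a sum of geometric sums `∑_{k<b} ω^k` of a `b`-th root of unity `ω ≠ 1`, hence `0`.
-/

namespace DigitalNets

open Complex
open scoped Real ComplexConjugate

def natDigit (b a : ℕ) (x : ℝ) : ℕ := ⌊(b : ℝ) ^ (a + 1) * x⌋₊ % b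

section Digits

variable {b : ℕ} {x y : ℝ}

lemma floor_pow_mul_eq_div (hb : 0 < b) {s t : ℕ} (hst : s ≤ t) :
    ⌊(b : ℝ) ^ s * x⌋₊ = ⌊(b : ℝ) ^ t * x⌋₊ / b ^ (t - s) := by
  rw [← Nat.floor_div_natCast, Nat.cast_pow, ← Nat.add_sub_of_le hst, pow_add,
    Nat.add_sub_cancel_left, mul_right_comm, mul_div_cancel_right₀ _ (by positivity)]

lemma floor_pow_mul_congr (hb : 0 < b) {s t : ℕ} (hst : s ≤ t)
    (h : ⌊(b : ℝ) ^ t * x⌋₊ = ⌊(b : ℝ) ^ t * y⌋₊) :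
    ⌊(b : ℝ) ^ s * x⌋₊ = ⌊(b : ℝ) ^ s * y⌋₊ := by
  rw [floor_pow_mul_eq_div hb hst, floor_pow_mul_eq_div hb hst, h]

lemma natDigit_congr (hb : 0 < b) {a t : ℕ} (hat : a < t)
    (h : ⌊(b : ℝ) ^ t * x⌋₊ = ⌊(b : ℝ) ^ t * y⌋₊) : natDigit b a x = natDigit b a y := by
  rw [natDigit, natDigit, floor_pow_mul_congr hb hat h]

lemma xdigit_eq_natDigit (hx : 0 ≤ x) (a : ℕ) : xdigit b a x = natDigit b a x := by
  rw [xdigit, natDigit, Int.natCast_mod, Int.natCast_floor_eq_floor (by positivity)]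

end Digits

lemma geom_sum_eq_zero_of_pow_eq_one {K : Type*} [DivisionRing K] {ω : K} {n : ℕ}
    (hωn : ω ^ n = 1) (hω : ω ≠ 1) : ∑ k ∈ range n, ω ^ k = 0 := by
  rw [geom_sum_eq hω, hωn, sub_self, zero_div]

lemma sum_range_mul_eq_sum_div_mod {M : Type*} [AddCommMonoid M] (g : ℕ → ℕ → M) (n b : ℕ) :
    ∑ r ∈ range (n * b), g (r / b) (r % b) = ∑ q ∈ range n, ∑ k ∈ range b, g q k := by
  rcases Nat.eq_zero_or_pos b with rfl | hb
  · simp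
  induction n with
  | zero => simp
  | succ n ih =>
    rw [Nat.succ_mul, sum_range_add, ih, sum_range_succ]
    congr 1
    refine sum_congr rfl fun k hk => ?_
    rw [Nat.mul_comm, Nat.mul_add_div hb, Nat.mul_add_mod,
      Nat.div_eq_of_lt (mem_range.1 hk), Nat.mod_eq_of_lt (mem_range.1 hk), add_zero]

lemma setIntegral_Ico_eq_sum_of_floor {E : Type*} [NormedAddCommGroup E] [NormedSpace ℝ E]
    [CompleteSpace E] {N : ℕ} (hN : 0 < N) {F : ℝ → E} {c : ℕ → E}
    (hF : ∀ x ∈ Set.Ico (0 : ℝ) 1, F x = c ⌊(N : ℝ) * x⌋₊) :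
    ∫ x in Set.Ico (0 : ℝ) 1, F x = (N : ℝ)⁻¹ • ∑ r ∈ range N, c r := by
  set S : ℕ → Set ℝ := fun r => Set.Ico ((r : ℝ) / N) (((r + 1 : ℕ) : ℝ) / N)
  have hNpos : (0 : ℝ) < N := Nat.cast_pos.2 hN
  have hmono : Monotone fun r : ℕ => (r : ℝ) / N := fun r s h =>
    div_le_div_of_nonneg_right (Nat.cast_le.2 h) hNpos.le
  have hfloor : ∀ r, ∀ x ∈ S r, ⌊(N : ℝ) * x⌋₊ = r := fun r x ⟨h₁, h₂⟩ => by
    rw [div_le_iff₀' hNpos] at h₁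
    rw [Nat.cast_succ, lt_div_iff₀' hNpos] at h₂
    exact (Nat.floor_eq_iff ((Nat.cast_nonneg r).trans h₁)).2 ⟨h₁, h₂⟩
  have hS_sub : ∀ r ∈ range N, S r ⊆ Set.Ico 0 1 := fun r hr x hx =>
    ⟨(div_nonneg (Nat.cast_nonneg r) hNpos.le).trans hx.1,
      hx.2.trans_le ((div_le_one hNpos).2 (Nat.cast_le.2 (mem_range.1 hr)))⟩
  have hunion : Set.Ico (0 : ℝ) 1 = ⋃ r ∈ range N, S r := by
    refine (Ico_subset_biUnion_Ico N fun r : ℕ => (r : ℝ) / N).trans' ?_ |>.antisymm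
      (Set.iUnion₂_subset hS_sub)
    simp [div_self hNpos.ne']
  have hconst : ∀ r ∈ range N, Set.EqOn F (fun _ => c r) (S r) := fun r hr x hx => by
    rw [hF x (hS_sub r hr hx), hfloor r x hx]
  have hvol : ∀ r, volume.real (S r) = (N : ℝ)⁻¹ := fun r => by
    rw [Real.volume_real_Ico, ← sub_div, Nat.cast_succ, add_sub_cancel_left, one_div,
      max_eq_left (by positivity)]
  have hdisj : Pairwise (Function.onFun Disjoint S) := hmono.pairwise_disjoint_on_Ico_succ
  rw [hunion, integral_biUnion_finset _ (fun _ _ => measurableSet_Ico) (hdisj.set_pairwise _)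
    (fun r hr => (integrableOn_const measure_Ico_lt_top.ne).congr_fun (hconst r hr).symm
      measurableSet_Ico), smul_sum]
  refine sum_congr rfl fun r hr => ?_
  rw [setIntegral_congr_fun measurableSet_Ico (hconst r hr), setIntegral_const, hvol]

lemma setIntegral_mul_pow_natDigit_eq_zero {b t : ℕ} (hb : 0 < b) {ω : ℂ} (hωb : ω ^ b = 1)
    (hω : ω ≠ 1) {f : ℝ → ℂ}
    (hf : ∀ x ∈ Set.Ico (0 : ℝ) 1, ∀ y ∈ Set.Ico (0 : ℝ) 1,
      ⌊(b : ℝ) ^ t * x⌋₊ = ⌊(b : ℝ) ^ t * y⌋₊ → f x = f y) :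
    ∫ x in Set.Ico (0 : ℝ) 1, f x * ω ^ natDigit b t x = 0 := by
  set g : ℕ → ℂ := fun q => f (q / (b : ℝ) ^ t)
  have hbt : (0 : ℝ) < (b : ℝ) ^ t := by positivity
  have hfg : ∀ x ∈ Set.Ico (0 : ℝ) 1, f x = g ⌊(b : ℝ) ^ t * x⌋₊ := fun x hx => by
    have hq : (⌊(b : ℝ) ^ t * x⌋₊ : ℝ) < (b : ℝ) ^ t :=
      (Nat.floor_le (by nlinarith [hx.1])).trans_lt (by nlinarith [hx.2])
    refine hf x hx _ ⟨by positivity, (div_lt_one hbt).2 hq⟩ ?_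
    rw [mul_div_cancel₀ _ hbt.ne', Nat.floor_natCast]
  -- on the level-`(t+1)` interval with index `b * q + k` the integrand is `g q * ω ^ k`
  have hsplit := sum_range_mul_eq_sum_div_mod (fun q k => g q * ω ^ k) (b ^ t) b
  rw [setIntegral_Ico_eq_sum_of_floor (N := b ^ t * b) (by positivity)
    (c := fun r => g (r / b) * ω ^ (r % b)), hsplit]
  · simp [← mul_sum, geom_sum_eq_zero_of_pow_eq_one hωb hω]
  · intro x hx
    rw [hfg x hx, natDigit, floor_pow_mul_eq_div hb (Nat.le_add_right t 1),
      Nat.add_sub_cancel_left, pow_one]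
    push_cast
    rw [← pow_succ]

lemma digit_eq_zero_of_lt_pow {b α a : ℕ} (h : α < b ^ a) : α / b ^ a % b = 0 := by
  rw [Nat.div_eq_of_lt h, Nat.zero_mod]

lemma digit_log_ne_zero {b α : ℕ} (hb : 1 < b) (hα : α ≠ 0) : α / b ^ Nat.log b α % b ≠ 0 := by
  have hlt : α / b ^ Nat.log b α < b :=
    Nat.div_lt_of_lt_mul (by rw [← pow_succ]; exact Nat.lt_pow_succ_log_self hb α)
  rw [Nat.mod_eq_of_lt hlt]
  exact (Nat.div_pos (Nat.pow_log_le_self b hα) (by positivity)).ne'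

lemma weight_one_zero (b : ℕ) : weight b 1 0 = 0 := by
  simp [weight, digitPositions]

lemma weight_one_eq_log_add_one {b α : ℕ} (hb : 1 < b) (hα : α ≠ 0) :
    weight b 1 α = Nat.log b α + 1 := by
  set L := Nat.log b α
  have hle : ∀ a ∈ digitPositions b α, a ≤ L + 1 := fun a ha => by
    by_contra! h
    refine (mem_filter.1 ha).2.2 (digit_eq_zero_of_lt_pow ?_)
    exact (Nat.lt_pow_succ_log_self hb α).trans_le (Nat.pow_le_pow_right (by omega) (by omega))
  have hmem : L + 1 ∈ digitPositions b α := mem_filter.2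
    ⟨mem_range.2 (by have := Nat.log_lt_self b hα; omega), by omega,
      by simpa using digit_log_ne_zero hb hα⟩
  rw [weight, sum_eq_single_of_mem _ hmem]
  · rw [card_eq_zero.2 (filter_eq_empty_iff.2 fun a ha => not_lt.2 (hle a ha)),
      if_pos Nat.one_pos]
  · intro a ha hne
    rw [if_neg (not_lt.2 (Nat.one_le_iff_ne_zero.2 (card_pos.2
      ⟨L + 1, mem_filter.2 ⟨hmem, lt_of_le_of_ne (hle a ha) hne⟩⟩).ne'))]

lemma lt_pow_weight_one {b : ℕ} (hb : 1 < b) (α : ℕ) : α < b ^ weight b 1 α := by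
  rcases eq_or_ne α 0 with rfl | hα
  · exact pow_pos (by omega) _
  · rw [weight_one_eq_log_add_one hb hα]
    exact Nat.lt_pow_succ_log_self hb α

lemma digit_weight_one_sub_one_ne_zero {b α : ℕ} (hb : 1 < b) (hα : α ≠ 0) :
    α / b ^ (weight b 1 α - 1) % b ≠ 0 := by
  simpa [weight_one_eq_log_add_one hb hα] using digit_log_ne_zero hb hα

lemma sum_range_digit_mul_eq {R : Type*} [Semiring R] {b α M N : ℕ} (hb : 0 < b) (f : ℕ → R)
    (hM : α < b ^ M) (hN : α < b ^ N) :
    ∑ a ∈ range M, ((α / b ^ a % b : ℕ) : R) * f a =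
      ∑ a ∈ range N, ((α / b ^ a % b : ℕ) : R) * f a := by
  wlog h : M ≤ N generalizing M N
  · exact (this hN hM (le_of_not_ge h)).symm
  refine sum_subset (range_subset_range.2 h) fun a _ haM => ?_
  have ha : M ≤ a := not_lt.1 (mem_range.not.1 haM)
  rw [digit_eq_zero_of_lt_pow (hM.trans_le (Nat.pow_le_pow_right hb ha)), Nat.cast_zero, zero_mul]

lemma walsh1_eq_pow {b α N : ℕ} (hb : 1 < b) (hN : α < b ^ N) {x : ℝ} (hx : 0 ≤ x) :
    walsh1 b α x = exp (2 * π * I / b) ^ ∑ a ∈ range N, α / b ^ a % b * natDigit b a x := by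
  have hα : α < b ^ (α + 1) :=
    (Nat.lt_pow_self hb).trans_le (Nat.pow_le_pow_right (by omega) α.le_succ)
  rw [walsh1, sum_range_digit_mul_eq (by omega) _ hα hN, ← exp_nat_mul]
  push_cast [xdigit_eq_natDigit hx]
  congr 1
  ring

lemma haar1_natCast_eq {b : ℕ} (hb : 0 < b) (j m l : ℕ) {x : ℝ} (hx : 0 ≤ x) :
    haar1 b j m l x =
      if ⌊(b : ℝ) ^ j * x⌋₊ = m then exp (2 * π * I / b) ^ (l * natDigit b j x) else 0 := by
  have hbj : (0 : ℝ) < (b : ℝ) ^ j := by positivity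
  have hmem : x ∈ Set.Ico ((b : ℝ) ^ (-(j : ℤ)) * m) ((b : ℝ) ^ (-(j : ℤ)) * (m + 1)) ↔
      ⌊(b : ℝ) ^ j * x⌋₊ = m := by
    rw [zpow_neg, zpow_natCast, Nat.floor_eq_iff (by positivity), Set.mem_Ico,
      inv_mul_le_iff₀ hbj, lt_inv_mul_iff₀ hbj]
  have hdigit : ⌊(b : ℝ) ^ ((j : ℤ) + 1) * x⌋ % (b : ℤ) = natDigit b j x := by
    rw [← xdigit_eq_natDigit hx, xdigit, ← zpow_natCast]
    push_cast
    rfl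
  rw [haar1, if_neg (by omega), hdigit]
  simp only [hmem]
  split_ifs
  · rw [← exp_nat_mul]
    push_cast
    congr 1
    ring
  · rfl

lemma haar1_congr {b jr t : ℕ} (hb : 0 < b) (ht : jr ≤ t) (m l : ℕ) {x y : ℝ}
    (hx : x ∈ Set.Ico (0 : ℝ) 1) (hy : y ∈ Set.Ico (0 : ℝ) 1)
    (h : ⌊(b : ℝ) ^ t * x⌋₊ = ⌊(b : ℝ) ^ t * y⌋₊) :
    haar1 b ((jr : ℤ) - 1) m l x = haar1 b ((jr : ℤ) - 1) m l y := by
  obtain _ | j := jr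
  · simp [haar1, hx, hy]
  · rw [Nat.cast_succ, add_sub_cancel_right, haar1_natCast_eq hb j m l hx.1,
      haar1_natCast_eq hb j m l hy.1, floor_pow_mul_congr hb (by omega) h,
      natDigit_congr hb (by omega) h]

lemma setIntegral_haar1_mul_conj_walsh1_eq_zero_of_weight_le {b j l α : ℕ} (hb : 1 < b)
    (hl : l ≠ 0) (hlb : l < b) (hα : weight b 1 α ≤ j) (m : ℕ) :
    ∫ x in Set.Ico (0 : ℝ) 1, haar1 b j m l x * conj (walsh1 b α x) = 0 := by
  have hb0 : 0 < b := by omega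
  have hζ := isPrimitiveRoot_exp b hb0.ne'
  set ζ := exp (2 * π * I / b)
  set f : ℝ → ℂ := fun x => (if ⌊(b : ℝ) ^ j * x⌋₊ = m then 1 else 0) * conj (walsh1 b α x)
  have hf : ∀ x ∈ Set.Ico (0 : ℝ) 1, ∀ y ∈ Set.Ico (0 : ℝ) 1,
      ⌊(b : ℝ) ^ j * x⌋₊ = ⌊(b : ℝ) ^ j * y⌋₊ → f x = f y := by
    intro x hx y hy h
    simp only [f, walsh1_eq_pow hb (lt_pow_weight_one hb α) hx.1,
      walsh1_eq_pow hb (lt_pow_weight_one hb α) hy.1, h]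
    rw [sum_congr rfl fun a ha =>
      congrArg _ (natDigit_congr hb0 ((mem_range.1 ha).trans_le hα) h)]
  calc ∫ x in Set.Ico (0 : ℝ) 1, haar1 b j m l x * conj (walsh1 b α x)
      = ∫ x in Set.Ico (0 : ℝ) 1, f x * (ζ ^ l) ^ natDigit b j x :=
        setIntegral_congr_fun measurableSet_Ico fun x hx => by
          simp only [f, haar1_natCast_eq hb0 j m l hx.1, ← pow_mul]
          split_ifs <;> ring
    _ = 0 := setIntegral_mul_pow_natDigit_eq_zero hb0
        (by rw [← pow_mul, mul_comm, pow_mul, hζ.pow_eq_one, one_pow])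
        (hζ.pow_ne_one_of_pos_of_lt hl hlb) hf

lemma setIntegral_haar1_mul_conj_walsh1_eq_zero_of_lt_weight {b jr α : ℕ} (hb : 1 < b)
    (hα : jr < weight b 1 α) (m l : ℕ) :
    ∫ x in Set.Ico (0 : ℝ) 1, haar1 b ((jr : ℤ) - 1) m l x * conj (walsh1 b α x) = 0 := by
  have hb0 : 0 < b := by omega
  obtain ⟨t, ht⟩ : ∃ t, weight b 1 α = t + 1 := ⟨_, (Nat.succ_pred_eq_of_pos (by omega)).symm⟩
  have hα0 : α ≠ 0 := by
    rintro rfl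
    simp [weight_one_zero] at ht
  have hD : α / b ^ t % b ≠ 0 := by
    simpa [ht] using digit_weight_one_sub_one_ne_zero hb hα0
  have hζ := isPrimitiveRoot_exp b hb0.ne'
  set ζ := exp (2 * π * I / b)
  set f : ℝ → ℂ := fun x =>
    haar1 b ((jr : ℤ) - 1) m l x * conj (ζ ^ ∑ a ∈ range t, α / b ^ a % b * natDigit b a x)
  have hf : ∀ x ∈ Set.Ico (0 : ℝ) 1, ∀ y ∈ Set.Ico (0 : ℝ) 1,
      ⌊(b : ℝ) ^ t * x⌋₊ = ⌊(b : ℝ) ^ t * y⌋₊ → f x = f y := by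
    intro x hx y hy h
    simp only [f, haar1_congr hb0 (by omega : jr ≤ t) m l hx hy h]
    rw [sum_congr rfl fun a ha => congrArg _ (natDigit_congr hb0 (mem_range.1 ha) h)]
  calc ∫ x in Set.Ico (0 : ℝ) 1, haar1 b ((jr : ℤ) - 1) m l x * conj (walsh1 b α x)
      = ∫ x in Set.Ico (0 : ℝ) 1, f x * conj (ζ ^ (α / b ^ t % b)) ^ natDigit b t x :=
        setIntegral_congr_fun measurableSet_Ico fun x hx => by
          simp only [f, ζ, walsh1_eq_pow hb (ht ▸ lt_pow_weight_one hb α) hx.1, sum_range_succ,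
            pow_add, pow_mul, map_mul, map_pow]
          ring
    _ = 0 := setIntegral_mul_pow_natDigit_eq_zero hb0
        (by rw [← map_pow, ← pow_mul, mul_comm, pow_mul, hζ.pow_eq_one, one_pow, map_one])
        ((map_ne_one_iff _ (RingHom.injective _)).2
          (hζ.pow_ne_one_of_pos_of_lt hD (Nat.mod_lt _ hb0))) hf

lemma setIntegral_haar1_mul_conj_walsh1_eq_zero {b jr m l α : ℕ} (hb : 1 < b)
    (hl : if jr = 0 then l = 1 else 1 ≤ l ∧ l < b) (hα : weight b 1 α ≠ jr) :
    ∫ x in Set.Ico (0 : ℝ) 1, haar1 b ((jr : ℤ) - 1) m l x * conj (walsh1 b α x) = 0 := by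
  rcases hα.lt_or_gt with hlt | hgt
  · obtain _ | j := jr
    · omega
    rw [if_neg j.succ_ne_zero] at hl
    rw [Nat.cast_succ, add_sub_cancel_right]
    exact setIntegral_haar1_mul_conj_walsh1_eq_zero_of_weight_le hb (by omega) hl.2
      (Nat.lt_succ_iff.1 hlt) m
  · exact setIntegral_haar1_mul_conj_walsh1_eq_zero_of_lt_weight hb hgt m l

lemma badicInterval1_eq_Ico {b jr m : ℕ} (hm : m < b ^ (jr - 1)) :
    badicInterval1 b ((jr : ℤ) - 1) m =
      Set.Ico ((m : ℝ) / (b : ℝ) ^ (jr - 1)) ((m + 1) / (b : ℝ) ^ (jr - 1)) := by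
  obtain _ | j := jr
  · simp_all [badicInterval1]
  · rw [badicInterval1, Nat.cast_succ, add_sub_cancel_right, if_neg (by omega), zpow_neg,
      zpow_natCast, Nat.add_sub_cancel, inv_mul_eq_div, inv_mul_eq_div]

lemma haar1_eq_zero_of_notMem {b : ℕ} {j : ℤ} {m l : ℕ} {x : ℝ}
    (hx : x ∉ badicInterval1 b j m) : haar1 b j m l x = 0 := by
  unfold badicInterval1 at hx
  unfold haar1
  split_ifs at hx ⊢ <;> simp_all

lemma norm_haar1_le_one {b : ℕ} (hb : 0 < b) (jr m l : ℕ) {x : ℝ}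
    (hx : x ∈ Set.Ico (0 : ℝ) 1) :
    ‖haar1 b ((jr : ℤ) - 1) m l x‖ ≤ 1 := by
  obtain _ | j := jr
  · simp [haar1, hx]
  · rw [Nat.cast_succ, add_sub_cancel_right, haar1_natCast_eq hb j m l hx.1]
    split_ifs <;> simp [(isPrimitiveRoot_exp b hb.ne').norm'_eq_one hb.ne']

lemma norm_walsh1 {b : ℕ} (hb : 1 < b) (α : ℕ) {x : ℝ} (hx : 0 ≤ x) : ‖walsh1 b α x‖ = 1 := by
  rw [walsh1_eq_pow hb (lt_pow_weight_one hb α) hx, norm_pow,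
    (isPrimitiveRoot_exp b (by omega)).norm'_eq_one (by omega), one_pow]

lemma norm_setIntegral_haar1_mul_conj_walsh1_le {b jr m : ℕ} (hb : 1 < b)
    (hm : m < b ^ (jr - 1)) (l α : ℕ) :
    ‖∫ x in Set.Ico (0 : ℝ) 1, haar1 b ((jr : ℤ) - 1) m l x * conj (walsh1 b α x)‖ ≤
      ((b : ℝ) ^ (jr - 1))⁻¹ := by
  have hB : (0 : ℝ) < (b : ℝ) ^ (jr - 1) := by positivity
  have hmB : (m : ℝ) + 1 ≤ (b : ℝ) ^ (jr - 1) := by exact_mod_cast Nat.succ_le_of_lt hm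
  have hsub : badicInterval1 b ((jr : ℤ) - 1) m ⊆ Set.Ico 0 1 := by
    rw [badicInterval1_eq_Ico hm]
    exact Set.Ico_subset_Ico (by positivity) ((div_le_one hB).2 hmB)
  rw [setIntegral_eq_of_subset_of_forall_sdiff_eq_zero measurableSet_Ico hsub fun x hx => by
    rw [haar1_eq_zero_of_notMem hx.2, zero_mul]]
  calc _ ≤ 1 * volume.real (badicInterval1 b ((jr : ℤ) - 1) m) :=
        norm_setIntegral_le_of_norm_le_const (badicInterval1_eq_Ico hm ▸ measure_Ico_lt_top)
          fun x hx => by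
            rw [norm_mul, Complex.norm_conj, norm_walsh1 hb α (hsub hx).1, mul_one]
            exact norm_haar1_le_one (by omega) jr m l (hsub hx)
    _ = ((b : ℝ) ^ (jr - 1))⁻¹ := by
      rw [one_mul, badicInterval1_eq_Ico hm, Real.volume_real_Ico, ← sub_div,
        add_sub_cancel_left, one_div, max_eq_left (by positivity)]

lemma innerCube_haar_walsh {b d : ℕ} (j : Fin d → ℤ) (m l α : Fin d → ℕ) :
    innerCube d (haar b d j m l) (walsh b d α) =
      ∏ i, ∫ x in Set.Ico (0 : ℝ) 1,
        haar1 b (j i) (m i) (l i) x * conj (walsh1 b (α i) x) := by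
  simp only [innerCube, unitCube, haar, walsh, map_prod, ← prod_mul_distrib]
  rw [volume_pi, Measure.restrict_pi_pi]
  exact integral_fintype_prod_eq_prod fun i x =>
    haar1 b (j i) (m i) (l i) x * conj (walsh1 b (α i) x)

end DigitalNets

open DigitalNets in
theorem haar_walsh_inner_general (b d : ℕ) (hb : 2 ≤ b) :
    ∃ C : ℝ, 0 < C ∧ ∀ (jr : Fin d → ℕ) (m : (i : Fin d) → Fin (b ^ (jr i - 1)))
      (l : Fin d → ℕ), validL b jr l → ∀ α : Fin d → ℕ,
      ‖innerCube d (haar b d (level jr) (fun i => (m i : ℕ)) l) (walsh b d α)‖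
          ≤ C * ((b : ℝ) ^ levelSum jr)⁻¹ ∧
      ((∃ i, weight b 1 (α i) ≠ jr i) →
        innerCube d (haar b d (level jr) (fun i => (m i : ℕ)) l) (walsh b d α) = 0) := by
  refine ⟨1, one_pos, fun jr m l hl α => ?_⟩
  rw [innerCube_haar_walsh]
  refine ⟨?_, fun ⟨i, hi⟩ => prod_eq_zero (mem_univ i)
    (setIntegral_haar1_mul_conj_walsh1_eq_zero hb (hl i) hi)⟩
  rw [one_mul, norm_prod, levelSum, ← prod_pow_eq_pow_sum, ← prod_inv_distrib]
  exact prod_le_prod (fun _ _ => norm_nonneg _)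
    fun i _ => norm_setIntegral_haar1_mul_conj_walsh1_le hb (m i).isLt (l i) (α i)

open DigitalNets in
/-- Lemma 5.5: `|⟨h_{j,m,l}, wal_α⟩| ≤ C b^{−|j|₊}`, and
`⟨h_{j,m,l}, wal_α⟩ = 0` if `ρ₁(α_i) ≠ j_i + 1` for some `i`. -/
theorem haar_walsh_inner (b d : ℕ) (hb : 2 ≤ b) (hd : 1 ≤ d) :
    ∃ C : ℝ, 0 < C ∧ ∀ (jr : Fin d → ℕ) (m : (i : Fin d) → Fin (b ^ (jr i - 1)))
      (l : Fin d → ℕ), validL b jr l → ∀ α : Fin d → ℕ,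
      ‖innerCube d (haar b d (level jr) (fun i => (m i : ℕ)) l) (walsh b d α)‖
          ≤ C * ((b : ℝ) ^ levelSum jr)⁻¹ ∧
      ((∃ i, weight b 1 (α i) ≠ jr i) →
        innerCube d (haar b d (level jr) (fun i => (m i : ℕ)) l) (walsh b d α) = 0) :=
  haar_walsh_inner_general b d hb
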